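/- Let Q = (0,1)^{d−1} × (−1, 0) and S = [0,1]^{d−1} × {0}. Let ρ⁰, ρ¹ be probability measures on the closure of Q of the form ρⁱ = ρⁱ_Q + ρⁱ_S with ρⁱ_Q having density bounded by k̄ on Q and ρⁱ_S concentrated on S. With ℓ = W₁(ρ⁰, ρ¹), for every Lipschitz function j: ∫_Q j (ρ⁰_Q − ρ¹_Q) ≤ 2 Lip(j)·ℓ + c(k̄)·‖j‖_∞ · ℓ^{1/2}. -/

import Mathlib

/-!
Take a near-optimal coupling `γ` of `ρ⁰` and `ρ¹`. Off `S` each `ρⁱ` agrees with `ρⁱ_Q`, so the left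
side is `∫ (g x - g y) dγ` with `g = 1_{Sᶜ} j`. For pairs on the same side of `S` the integrand is
at most `Lip(j) |x - y|`; pairs separated by `S` contribute at most `‖j‖_∞` each, and their mass is
at most `γ(|x - y| ≥ t) ≤ ℓ / t` (Markov) plus the `ρⁱ_Q`-mass of the strip of width `t` below `S`,
which is at most `k̄ t`. Choosing `t = √ℓ` gives the constant `c = 1 + 2 k̄`.
-/

open MeasureTheory
open scoped ENNReal NNReal

noncomputable def IsCoupling {d : ℕ} (γ : Measure (EuclideanSpace ℝ (Fin d) × EuclideanSpace ℝ (Fin d)))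
    (μ ν : Measure (EuclideanSpace ℝ (Fin d))) : Prop :=
  γ.map Prod.fst = μ ∧ γ.map Prod.snd = ν

/-- The Wasserstein distance of order `p` (defined as an infimum over couplings). -/
noncomputable def Wass {d : ℕ} (p : ℝ) (μ ν : Measure (EuclideanSpace ℝ (Fin d))) : ℝ :=
  sInf { c : ℝ | ∃ γ : Measure (EuclideanSpace ℝ (Fin d) × EuclideanSpace ℝ (Fin d)),
    IsCoupling γ μ ν ∧ c = (∫ z, dist z.1 z.2 ^ p ∂γ) ^ (1/p) }

/-- The open box `(0,1)^{d} × (-1,0)` in `ℝ^{d+1}`. -/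
def boxQ (d : ℕ) : Set (EuclideanSpace ℝ (Fin (d+1))) :=
  {x | (∀ i : Fin d, x i.castSucc ∈ Set.Ioo (0:ℝ) 1) ∧ x (Fin.last d) ∈ Set.Ioo (-1:ℝ) 0}

/-- The top face `S = [0,1]^{d} × {0}` in `ℝ^{d+1}`. -/
def faceS (d : ℕ) : Set (EuclideanSpace ℝ (Fin (d+1))) :=
  {x | (∀ i : Fin d, x i.castSucc ∈ Set.Icc (0:ℝ) 1) ∧ x (Fin.last d) = 0}

open Set Metric

/-- `J^d × I`: the last coordinate ranges over `I`, the others over `J`. -/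
def prism (d : ℕ) (J I : Set ℝ) : Set (EuclideanSpace ℝ (Fin (d+1))) :=
  WithLp.ofLp ⁻¹' univ.pi (Fin.lastCases I fun _ => J)

section Prism

variable {d : ℕ}

lemma mem_prism {J I : Set ℝ} {x : EuclideanSpace ℝ (Fin (d+1))} :
    x ∈ prism d J I ↔ (∀ i : Fin d, x i.castSucc ∈ J) ∧ x (Fin.last d) ∈ I := by
  simp [prism, Fin.forall_fin_succ', and_comm]

lemma boxQ_eq_prism : boxQ d = prism d (Ioo 0 1) (Ioo (-1) 0) :=
  Set.ext fun _ => mem_prism.symm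

lemma faceS_eq_prism : faceS d = prism d (Icc 0 1) {0} := by
  ext x
  simp [faceS, mem_prism]

lemma prism_mono {J J' I I' : Set ℝ} (hJ : J ⊆ J') (hI : I ⊆ I') : prism d J I ⊆ prism d J' I' :=
  fun _ hx => mem_prism.2 ⟨fun i => hJ ((mem_prism.1 hx).1 i), hI (mem_prism.1 hx).2⟩

lemma isOpen_prism {J I : Set ℝ} (hJ : IsOpen J) (hI : IsOpen I) : IsOpen (prism d J I) :=
  (isOpen_set_pi finite_univ fun i _ => by induction i using Fin.lastCases <;> simpa).preimage
    (PiLp.continuous_ofLp 2 _)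

lemma isClosed_prism {J I : Set ℝ} (hJ : IsClosed J) (hI : IsClosed I) : IsClosed (prism d J I) :=
  (isClosed_set_pi fun i _ => by induction i using Fin.lastCases <;> simpa).preimage
    (PiLp.continuous_ofLp 2 _)

lemma isCompact_prism {J I : Set ℝ} (hJ : IsCompact J) (hI : IsCompact I) :
    IsCompact (prism d J I) :=
  (PiLp.homeomorph 2 _).isCompact_preimage.2
    (isCompact_univ_pi fun i => by induction i using Fin.lastCases <;> simpa)

lemma volume_prism (J I : Set ℝ) : volume (prism d J I) = volume J ^ d * volume I := by
  refine ((EuclideanSpace.volume_preserving_symm_measurableEquiv_toLp _).measure_preimage_equiv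
    _).trans ?_
  rw [volume_pi_pi, Fin.prod_univ_castSucc]
  simp

end Prism

section Box

variable {d : ℕ}

lemma disjoint_boxQ_faceS : Disjoint (boxQ d) (faceS d) :=
  Set.disjoint_left.2 fun _ hQ hS => hQ.2.2.ne hS.2

lemma measurableSet_boxQ : MeasurableSet (boxQ d) :=
  (boxQ_eq_prism ▸ isOpen_prism isOpen_Ioo isOpen_Ioo).measurableSet

lemma measurableSet_faceS : MeasurableSet (faceS d) :=
  (faceS_eq_prism ▸ isClosed_prism isClosed_Icc isClosed_singleton).measurableSet

lemma isBounded_boxQ_union_faceS : Bornology.IsBounded (boxQ d ∪ faceS d) := by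
  refine (isCompact_prism (d := d) (J := Icc 0 1) (I := Icc (-1) 0) isCompact_Icc
    isCompact_Icc).isBounded.subset ?_
  rw [boxQ_eq_prism, faceS_eq_prism]
  exact union_subset (prism_mono Ioo_subset_Icc_self Ioo_subset_Icc_self)
    (prism_mono subset_rfl (by simp))

lemma boxQ_inter_thickening_faceS_subset (t : ℝ) :
    boxQ d ∩ thickening t (faceS d) ⊆ prism d (Ioo 0 1) (Ioo (-t) 0) := by
  rintro x ⟨hxQ, hxS⟩
  obtain ⟨y, hyS, hxy⟩ := mem_thickening_iff.1 hxS
  have hlast : |x (Fin.last d)| < t := by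
    simpa [hyS.2, Real.dist_eq] using (PiLp.dist_apply_le x y (Fin.last d)).trans_lt hxy
  exact mem_prism.2 ⟨hxQ.1, (neg_lt_of_abs_lt hlast), hxQ.2.2⟩

lemma volume_boxQ_inter_thickening_faceS_le (t : ℝ) :
    volume (boxQ d ∩ thickening t (faceS d)) ≤ ENNReal.ofReal t :=
  (measure_mono (boxQ_inter_thickening_faceS_subset t)).trans_eq (by simp [volume_prism])

end Box

section Coupling

variable {X : Type*} [PseudoMetricSpace X]

def crossingPairs (S : Set X) : Set (X × X) := S ×ˢ Sᶜ ∪ Sᶜ ×ˢ S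

lemma indicator_compl_sub_le {j : X → ℝ} {Lj : ℝ≥0} (hj : LipschitzWith Lj j) (S : Set X)
    {B : ℝ} {x y : X} (hx : |Sᶜ.indicator j x| ≤ B) (hy : |Sᶜ.indicator j y| ≤ B) :
    Sᶜ.indicator j x - Sᶜ.indicator j y ≤
      Lj * dist x y + (crossingPairs S).indicator (fun _ => B) (x, y) := by
  have hd : 0 ≤ Lj * dist x y := by positivity
  by_cases hxS : x ∈ S <;> by_cases hyS : y ∈ S <;>
    simp only [crossingPairs, mem_union, mem_prod, mem_compl_iff, hxS, hyS, not_true_eq_false,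
      not_false_eq_true, indicator_of_mem, indicator_of_notMem, abs_zero, and_true, and_false,
      and_self, or_self, or_false, or_true, sub_self, zero_sub, sub_zero, add_zero] at hx hy ⊢
  · linarith
  · linarith [neg_abs_le (j y)]
  · linarith [le_abs_self (j x)]
  · have := hj.dist_le_mul x y
    rw [Real.dist_eq] at this
    linarith [le_abs_self (j x - j y)]

variable [MeasurableSpace X]

lemma measureReal_crossingPairs_le {γ : Measure (X × X)} [IsFiniteMeasure γ]
    (hdist : Integrable (fun z : X × X => dist z.1 z.2) γ) (S : Set X) {t : ℝ} (ht : 0 < t) :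
    γ.real (crossingPairs S) ≤ (∫ z, dist z.1 z.2 ∂γ) / t
      + (γ.map Prod.fst).real (thickening t S \ S) + (γ.map Prod.snd).real (thickening t S \ S) := by
  set A := thickening t S \ S
  have hsub : crossingPairs S ⊆
      {z | t ≤ dist z.1 z.2} ∪ Prod.fst ⁻¹' A ∪ Prod.snd ⁻¹' A := by
    rintro ⟨x, y⟩ hxy
    obtain hd | hd := le_or_gt t (dist x y)
    · exact Or.inl (Or.inl hd)
    rcases hxy with ⟨hx, hy⟩ | ⟨hx, hy⟩
    · exact Or.inr ⟨mem_thickening_iff.2 ⟨x, hx, by rwa [dist_comm]⟩, hy⟩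
    · exact Or.inl (Or.inr ⟨mem_thickening_iff.2 ⟨y, hy, hd⟩, hx⟩)
  have hmarkov : γ.real {z | t ≤ dist z.1 z.2} ≤ (∫ z, dist z.1 z.2 ∂γ) / t := by
    rw [le_div_iff₀' ht]
    exact mul_meas_ge_le_integral_of_nonneg (ae_of_all _ fun _ => dist_nonneg) hdist t
  have hmap {f : X × X → X} (hf : Measurable f) : γ.real (f ⁻¹' A) ≤ (γ.map f).real A :=
    ENNReal.toReal_mono (measure_ne_top _ _) (Measure.le_map_apply hf.aemeasurable A)
  calc γ.real (crossingPairs S)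
      ≤ γ.real {z | t ≤ dist z.1 z.2} + γ.real (Prod.fst ⁻¹' A) + γ.real (Prod.snd ⁻¹' A) :=
        (measureReal_mono hsub).trans <|
          (measureReal_union_le _ _).trans (add_le_add_left (measureReal_union_le _ _) _)
    _ ≤ _ := add_le_add (add_le_add hmarkov (hmap measurable_fst)) (hmap measurable_snd)

variable [OpensMeasurableSpace X]

lemma integral_indicator_compl_map_sub_le {j : X → ℝ} {Lj : ℝ≥0} (hj : LipschitzWith Lj j)
    {S : Set X} (hS : MeasurableSet S) {γ : Measure (X × X)} [IsFiniteMeasure γ]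
    (hdist : Integrable (fun z : X × X => dist z.1 z.2) γ) {B : ℝ}
    (h₁ : ∀ᵐ x ∂γ.map Prod.fst, |Sᶜ.indicator j x| ≤ B)
    (h₂ : ∀ᵐ x ∂γ.map Prod.snd, |Sᶜ.indicator j x| ≤ B) :
    ∫ x, Sᶜ.indicator j x ∂γ.map Prod.fst - ∫ x, Sᶜ.indicator j x ∂γ.map Prod.snd ≤
      Lj * ∫ z, dist z.1 z.2 ∂γ + B * γ.real (crossingPairs S) := by
  set g := Sᶜ.indicator j
  have hg : Measurable g := hj.continuous.measurable.indicator hS.compl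
  have hcross : MeasurableSet (crossingPairs S) := (hS.prod hS.compl).union (hS.compl.prod hS)
  have h₁' : ∀ᵐ z ∂γ, |g z.1| ≤ B := ae_of_ae_map measurable_fst.aemeasurable h₁
  have h₂' : ∀ᵐ z ∂γ, |g z.2| ≤ B := ae_of_ae_map measurable_snd.aemeasurable h₂
  have hg₁ : Integrable (fun z => g z.1) γ :=
    .of_bound (hg.comp measurable_fst).aestronglyMeasurable B (by simpa only [Real.norm_eq_abs])
  have hg₂ : Integrable (fun z => g z.2) γ :=
    .of_bound (hg.comp measurable_snd).aestronglyMeasurable B (by simpa only [Real.norm_eq_abs])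
  rw [integral_map measurable_fst.aemeasurable hg.aestronglyMeasurable,
    integral_map measurable_snd.aemeasurable hg.aestronglyMeasurable, ← integral_sub hg₁ hg₂]
  calc ∫ z, (g z.1 - g z.2) ∂γ
      ≤ ∫ z, (Lj * dist z.1 z.2 + (crossingPairs S).indicator (fun _ => B) z) ∂γ := by
        refine integral_mono_ae (hg₁.sub hg₂)
          ((hdist.const_mul _).add ((integrable_const B).indicator hcross)) ?_
        filter_upwards [h₁', h₂'] with z hz₁ hz₂ using indicator_compl_sub_le hj S hz₁ hz₂
    _ = Lj * ∫ z, dist z.1 z.2 ∂γ + B * γ.real (crossingPairs S) := by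
        rw [integral_add (hdist.const_mul _) ((integrable_const B).indicator hcross),
          integral_const_mul, integral_indicator_const _ hcross, smul_eq_mul, mul_comm B]

lemma integrable_dist_of_ae_mem [SecondCountableTopology X] {γ : Measure (X × X)}
    [IsFiniteMeasure γ] {K : Set X} (hK : Bornology.IsBounded K)
    (h₁ : ∀ᵐ x ∂γ.map Prod.fst, x ∈ K) (h₂ : ∀ᵐ x ∂γ.map Prod.snd, x ∈ K) :
    Integrable (fun z : X × X => dist z.1 z.2) γ := by
  obtain ⟨C, hC⟩ := Metric.isBounded_iff.1 hK
  refine .of_bound (continuous_fst.dist continuous_snd).aestronglyMeasurable C ?_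
  filter_upwards [ae_of_ae_map measurable_fst.aemeasurable h₁,
    ae_of_ae_map measurable_snd.aemeasurable h₂] with z hz₁ hz₂
  simpa only [Real.norm_eq_abs, abs_of_nonneg dist_nonneg] using hC hz₁ hz₂

end Coupling

section Wasserstein

variable {n : ℕ} {μ ν : Measure (EuclideanSpace ℝ (Fin n))}

lemma isCoupling_prod [IsProbabilityMeasure μ] [IsProbabilityMeasure ν] :
    IsCoupling (μ.prod ν) μ ν := by
  simp [IsCoupling]

lemma IsCoupling.isProbabilityMeasure [IsProbabilityMeasure μ] {γ} (hγ : IsCoupling γ μ ν) :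
    IsProbabilityMeasure γ :=
  ⟨by rw [← preimage_univ (f := Prod.fst), ← Measure.map_apply measurable_fst .univ, hγ.1,
    measure_univ]⟩

lemma wass_one_eq : Wass 1 μ ν = sInf {c | ∃ γ, IsCoupling γ μ ν ∧ c = ∫ z, dist z.1 z.2 ∂γ} := by
  simp [Wass]

lemma wass_one_nonneg : 0 ≤ Wass 1 μ ν := by
  rw [wass_one_eq]
  exact Real.sInf_nonneg fun _ ⟨_, _, hc⟩ => hc ▸ integral_nonneg fun _ => dist_nonneg

lemma exists_isCoupling_integral_dist_lt [IsProbabilityMeasure μ] [IsProbabilityMeasure ν]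
    {s : ℝ} (hs : Wass 1 μ ν < s) : ∃ γ, IsCoupling γ μ ν ∧ ∫ z, dist z.1 z.2 ∂γ < s := by
  rw [wass_one_eq] at hs
  have hne : {c | ∃ γ, IsCoupling γ μ ν ∧ c = ∫ z, dist z.1 z.2 ∂γ}.Nonempty :=
    ⟨_, _, isCoupling_prod, rfl⟩
  obtain ⟨_, ⟨γ, hγ, rfl⟩, hlt⟩ := exists_lt_of_csInf_lt hne hs
  exact ⟨γ, hγ, hlt⟩

end Wasserstein

lemma withDensity_le_smul_of_ae_le {α : Type*} [MeasurableSpace α] {μ : Measure α}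
    {f : α → ℝ≥0∞} {c : ℝ≥0∞} (hf : ∀ᵐ x ∂μ, f x ≤ c) : μ.withDensity f ≤ c • μ :=
  withDensity_const (μ := μ) c ▸ withDensity_mono hf

section Decomposition

variable {d : ℕ} {k : ℝ} {ρQ ρS : Measure (EuclideanSpace ℝ (Fin (d+1)))}

lemma ae_mem_boxQ (hQ : ρQ ≤ ENNReal.ofReal k • volume.restrict (boxQ d)) :
    ∀ᵐ x ∂ρQ, x ∈ boxQ d :=
  (Measure.absolutelyContinuous_of_le_smul hQ).ae_le (ae_restrict_mem measurableSet_boxQ)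

lemma ae_mem_boxQ_union_faceS (hQ : ρQ ≤ ENNReal.ofReal k • volume.restrict (boxQ d))
    (hS : ρS (faceS d)ᶜ = 0) : ∀ᵐ x ∂ρQ + ρS, x ∈ boxQ d ∪ faceS d :=
  ae_add_measure_iff.2
    ⟨(ae_mem_boxQ hQ).mono fun _ => Or.inl, (ae_iff.2 hS).mono fun _ => Or.inr⟩

lemma restrict_compl_faceS_add (hQ : ρQ ≤ ENNReal.ofReal k • volume.restrict (boxQ d))
    (hS : ρS (faceS d)ᶜ = 0) : (ρQ + ρS).restrict (faceS d)ᶜ = ρQ := by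
  have hQS : ρQ.restrict (faceS d)ᶜ = ρQ :=
    Measure.restrict_eq_self_of_ae_mem <|
      (ae_mem_boxQ hQ).mono fun _ hx => disjoint_boxQ_faceS.notMem_of_mem_left hx
  rw [Measure.restrict_add, hQS, Measure.restrict_eq_zero.2 hS, add_zero]

lemma measureReal_thickening_faceS_diff_le (hk : 0 ≤ k)
    (hQ : ρQ ≤ ENNReal.ofReal k • volume.restrict (boxQ d)) (hS : ρS (faceS d)ᶜ = 0)
    {t : ℝ} (ht : 0 ≤ t) :
    (ρQ + ρS).real (thickening t (faceS d) \ faceS d) ≤ k * t := by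
  set A := thickening t (faceS d) \ faceS d
  refine ENNReal.toReal_le_of_le_ofReal (mul_nonneg hk ht) ?_
  rw [Measure.add_apply, measure_mono_null (sdiff_subset_compl _ _) hS, add_zero]
  calc ρQ A ≤ (ENNReal.ofReal k • volume.restrict (boxQ d)) A := hQ A
    _ = ENNReal.ofReal k * volume (A ∩ boxQ d) := by
        rw [Measure.smul_apply, smul_eq_mul, Measure.restrict_apply' measurableSet_boxQ]
    _ ≤ ENNReal.ofReal k * ENNReal.ofReal t := by
        gcongr
        exact (measure_mono (t := boxQ d ∩ thickening t (faceS d)) fun _ hx => ⟨hx.2, hx.1.1⟩)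
          |>.trans (volume_boxQ_inter_thickening_faceS_le t)
    _ = ENNReal.ofReal (k * t) := (ENNReal.ofReal_mul hk).symm

lemma ae_abs_indicator_compl_faceS_le {j : EuclideanSpace ℝ (Fin (d+1)) → ℝ} {B : ℝ≥0}
    (hQ : ρQ ≤ ENNReal.ofReal k • volume.restrict (boxQ d)) (hS : ρS (faceS d)ᶜ = 0)
    (hB : ∀ x ∈ boxQ d, |j x| ≤ B) : ∀ᵐ x ∂ρQ + ρS, |(faceS d)ᶜ.indicator j x| ≤ B := by
  filter_upwards [ae_mem_boxQ_union_faceS hQ hS] with x hx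
  rcases hx with hxQ | hxS
  · rw [indicator_of_mem (disjoint_boxQ_faceS.notMem_of_mem_left hxQ)]
    exact hB x hxQ
  · simp [hxS]

end Decomposition

section Estimate

variable {d : ℕ} {k : ℝ} {ρ0Q ρ0S ρ1Q ρ1S : Measure (EuclideanSpace ℝ (Fin (d+1)))}
  {j : EuclideanSpace ℝ (Fin (d+1)) → ℝ} {Lj B : ℝ≥0}

lemma integral_sub_integral_le_of_isCoupling (hk : 0 ≤ k)
    (h0Q : ρ0Q ≤ ENNReal.ofReal k • volume.restrict (boxQ d)) (h0S : ρ0S (faceS d)ᶜ = 0)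
    (h1Q : ρ1Q ≤ ENNReal.ofReal k • volume.restrict (boxQ d)) (h1S : ρ1S (faceS d)ᶜ = 0)
    (hj : LipschitzWith Lj j) (hB : ∀ x ∈ boxQ d, |j x| ≤ B) {γ} [IsFiniteMeasure γ]
    (hγ : IsCoupling γ (ρ0Q + ρ0S) (ρ1Q + ρ1S)) {t : ℝ} (ht : 0 < t) :
    ∫ x, j x ∂ρ0Q - ∫ x, j x ∂ρ1Q ≤
      Lj * ∫ z, dist z.1 z.2 ∂γ + B * ((∫ z, dist z.1 z.2 ∂γ) / t + 2 * k * t) := by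
  obtain ⟨hγ₁, hγ₂⟩ := hγ
  have hdist : Integrable (fun z => dist z.1 z.2) γ :=
    integrable_dist_of_ae_mem isBounded_boxQ_union_faceS
      (hγ₁ ▸ ae_mem_boxQ_union_faceS h0Q h0S) (hγ₂ ▸ ae_mem_boxQ_union_faceS h1Q h1S)
  have hcross := measureReal_crossingPairs_le hdist (faceS d) ht
  rw [hγ₁, hγ₂] at hcross
  calc ∫ x, j x ∂ρ0Q - ∫ x, j x ∂ρ1Q
      = ∫ x, (faceS d)ᶜ.indicator j x ∂γ.map Prod.fst
        - ∫ x, (faceS d)ᶜ.indicator j x ∂γ.map Prod.snd := by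
        rw [hγ₁, hγ₂, integral_indicator measurableSet_faceS.compl,
          integral_indicator measurableSet_faceS.compl, restrict_compl_faceS_add h0Q h0S,
          restrict_compl_faceS_add h1Q h1S]
    _ ≤ Lj * ∫ z, dist z.1 z.2 ∂γ + B * γ.real (crossingPairs (faceS d)) :=
        integral_indicator_compl_map_sub_le hj measurableSet_faceS hdist
          (hγ₁ ▸ ae_abs_indicator_compl_faceS_le h0Q h0S hB)
          (hγ₂ ▸ ae_abs_indicator_compl_faceS_le h1Q h1S hB)
    _ ≤ Lj * ∫ z, dist z.1 z.2 ∂γ + B * ((∫ z, dist z.1 z.2 ∂γ) / t + k * t + k * t) := by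
        gcongr
        exact hcross.trans (add_le_add (add_le_add le_rfl
          (measureReal_thickening_faceS_diff_le hk h0Q h0S ht.le))
          (measureReal_thickening_faceS_diff_le hk h1Q h1S ht.le))
    _ = Lj * ∫ z, dist z.1 z.2 ∂γ + B * ((∫ z, dist z.1 z.2 ∂γ) / t + 2 * k * t) := by ring

lemma integral_sub_integral_le_wass (hk : 0 ≤ k)
    (h0Q : ρ0Q ≤ ENNReal.ofReal k • volume.restrict (boxQ d)) (h0S : ρ0S (faceS d)ᶜ = 0)
    (h1Q : ρ1Q ≤ ENNReal.ofReal k • volume.restrict (boxQ d)) (h1S : ρ1S (faceS d)ᶜ = 0)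
    [IsProbabilityMeasure (ρ0Q + ρ0S)] [IsProbabilityMeasure (ρ1Q + ρ1S)]
    (hj : LipschitzWith Lj j) (hB : ∀ x ∈ boxQ d, |j x| ≤ B) :
    ∫ x, j x ∂ρ0Q - ∫ x, j x ∂ρ1Q ≤ Lj * Wass 1 (ρ0Q + ρ0S) (ρ1Q + ρ1S)
      + (1 + 2 * k) * B * √(Wass 1 (ρ0Q + ρ0S) (ρ1Q + ρ1S)) := by
  set ℓ := Wass 1 (ρ0Q + ρ0S) (ρ1Q + ρ1S)
  have hF : Continuous fun s : ℝ => Lj * s + (1 + 2 * k) * B * √s := by fun_prop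
  have hlim := (hF.tendsto ℓ).mono_left (nhdsWithin_le_nhds (s := Ioi ℓ))
  refine ge_of_tendsto hlim (eventually_nhdsWithin_of_forall fun s (hs : ℓ < s) => ?_)
  obtain ⟨γ, hγ, hγs⟩ := exists_isCoupling_integral_dist_lt hs
  have := hγ.isProbabilityMeasure
  have hs₀ : 0 < √s := Real.sqrt_pos.2 (wass_one_nonneg.trans_lt hs)
  have hL₀ : 0 ≤ ∫ z, dist z.1 z.2 ∂γ := integral_nonneg fun _ => dist_nonneg
  calc ∫ x, j x ∂ρ0Q - ∫ x, j x ∂ρ1Q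
      ≤ Lj * ∫ z, dist z.1 z.2 ∂γ + B * ((∫ z, dist z.1 z.2 ∂γ) / √s + 2 * k * √s) :=
        integral_sub_integral_le_of_isCoupling hk h0Q h0S h1Q h1S hj hB hγ hs₀
    _ ≤ Lj * s + B * (s / √s + 2 * k * √s) := by gcongr
    _ = Lj * s + (1 + 2 * k) * B * √s := by rw [Real.div_sqrt]; ring

end Estimate

theorem stmt3 (d : ℕ) (kbar : ℝ) (hk : 0 < kbar) :
    ∃ c : ℝ, 0 ≤ c ∧
      ∀ (ρ0Q ρ1Q ρ0S ρ1S : Measure (EuclideanSpace ℝ (Fin (d+1))))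
        (f0 f1 : EuclideanSpace ℝ (Fin (d+1)) → ℝ≥0∞),
        ρ0Q = (volume.restrict (boxQ d)).withDensity f0 →
        ρ1Q = (volume.restrict (boxQ d)).withDensity f1 →
        (∀ᵐ x ∂(volume.restrict (boxQ d)), f0 x ≤ ENNReal.ofReal kbar) →
        (∀ᵐ x ∂(volume.restrict (boxQ d)), f1 x ≤ ENNReal.ofReal kbar) →
        ρ0S (faceS d)ᶜ = 0 → ρ1S (faceS d)ᶜ = 0 →
        IsProbabilityMeasure (ρ0Q + ρ0S) → IsProbabilityMeasure (ρ1Q + ρ1S) →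
        ∀ (j : EuclideanSpace ℝ (Fin (d+1)) → ℝ) (Lj B : ℝ≥0),
          LipschitzWith Lj j → (∀ x ∈ closure (boxQ d), |j x| ≤ B) →
          (∫ x, j x ∂ρ0Q) - (∫ x, j x ∂ρ1Q) ≤
            2 * (Lj : ℝ) * Wass 1 (ρ0Q + ρ0S) (ρ1Q + ρ1S)
              + c * B * (Wass 1 (ρ0Q + ρ0S) (ρ1Q + ρ1S)) ^ (1/2 : ℝ) := by
  refine ⟨1 + 2 * kbar, by positivity, ?_⟩
  intro ρ0Q ρ1Q ρ0S ρ1S f0 f1 h0Q h1Q hf0 hf1 h0S h1S _ _ j Lj B hj hB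
  set ℓ := Wass 1 (ρ0Q + ρ0S) (ρ1Q + ρ1S)
  have hℓ : 0 ≤ ℓ := wass_one_nonneg
  calc _ ≤ Lj * ℓ + (1 + 2 * kbar) * B * √ℓ :=
        integral_sub_integral_le_wass hk.le (h0Q ▸ withDensity_le_smul_of_ae_le hf0) h0S
          (h1Q ▸ withDensity_le_smul_of_ae_le hf1) h1S hj fun x hx => hB x (subset_closure hx)
    _ ≤ _ := by
        rw [Real.sqrt_eq_rpow]
        gcongr
        linarith [mul_nonneg Lj.coe_nonneg hℓ]
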